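/- arXiv:1206.1906 — 2 statements merged into one kernel-verified Lean document; each statement's English description precedes it below -/
import Mathlib

section
/- Let H be a graph. Then l_f(H) ≤ dim_f(K1⊙H) ≤ l_f(H) + 1, where K1⊙H is the corona product of the one-vertex graph K1 with H. -/
open Finset

variable {α β V : Type*}

/-- The corona product `G ⊙ H`. -/
def SimpleGraph.corona (G : SimpleGraph α) (H : SimpleGraph β) :
    SimpleGraph (α ⊕ α × β) where
  Adj x y :=
    match x, y with
    | Sum.inl u1, Sum.inl u2 => G.Adj u1 u2
    | Sum.inl u1, Sum.inr p => u1 = p.1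
    | Sum.inr p, Sum.inl u2 => p.1 = u2
    | Sum.inr p, Sum.inr q => p.1 = q.1 ∧ H.Adj p.2 q.2
  symm := by
    constructor
    rintro (u1 | p) (u2 | q) h
    · exact h.symm
    · exact h.symm
    · exact h.symm
    · exact ⟨h.1.symm, h.2.symm⟩
  loopless := by
    constructor
    rintro (u | p) h
    · exact G.irrefl h
    · exact H.irrefl h.2

/-- The lexicographic product `G[H]`. -/
def SimpleGraph.lexProd (G : SimpleGraph α) (H : SimpleGraph β) :
    SimpleGraph (α × β) where
  Adj x y := G.Adj x.1 y.1 ∨ (x.1 = y.1 ∧ H.Adj x.2 y.2)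
  symm := by
    constructor
    rintro x y (h | ⟨h1, h2⟩)
    · exact Or.inl h.symm
    · exact Or.inr ⟨h1.symm, h2.symm⟩
  loopless := by
    constructor
    rintro x (h | ⟨h1, h2⟩)
    · exact G.irrefl h
    · exact H.irrefl h2

open scoped Classical in
/-- `R_F{x,y}`: the set of vertices resolving `x` and `y` (distance measured by `edist`,
which is `∞` between vertices in different components). -/
noncomputable def resolvingFinset (F : SimpleGraph V) [Fintype V] (x y : V) : Finset V :=
  univ.filter fun z => F.edist x z ≠ F.edist y z

/-- `S_H{v₁,v₂} = {v₁,v₂} ∪ (N_H(v₁) Δ N_H(v₂))`. -/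
def locatingFinset (H : SimpleGraph V) [Fintype V] [DecidableEq V]
    [DecidableRel H.Adj] (v1 v2 : V) : Finset V :=
  {v1, v2} ∪ symmDiff (H.neighborFinset v1) (H.neighborFinset v2)

/-- A resolving function of `F`. -/
def IsResolvingFn (F : SimpleGraph V) [Fintype V] (g : V → ℝ) : Prop :=
  (∀ v, g v ∈ Set.Icc (0 : ℝ) 1) ∧
    ∀ x y : V, x ≠ y → 1 ≤ ∑ z ∈ resolvingFinset F x y, g z

/-- The fractional metric dimension `dim_f(F)`. -/
noncomputable def fracMetricDim (F : SimpleGraph V) [Fintype V] : ℝ :=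
  sInf {w | ∃ g, IsResolvingFn F g ∧ w = ∑ v, g v}

/-- A locating function of `H`. -/
def IsLocatingFn (H : SimpleGraph V) [Fintype V] [DecidableEq V]
    [DecidableRel H.Adj] (g : V → ℝ) : Prop :=
  (∀ v, g v ∈ Set.Icc (0 : ℝ) 1) ∧
    ∀ v1 v2 : V, v1 ≠ v2 → 1 ≤ ∑ v ∈ locatingFinset H v1 v2, g v

/-- `l_f(H)`: the minimum weight of a locating function. -/
noncomputable def fracLoc (H : SimpleGraph V) [Fintype V] [DecidableEq V]
    [DecidableRel H.Adj] : ℝ :=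
  sInf {w | ∃ g, IsLocatingFn H g ∧ w = ∑ v, g v}

open scoped Classical in
/-- `λ(H)`: maximum number of common neighbours of two adjacent vertices, `-1` if no edges. -/
noncomputable def lambdaMax (H : SimpleGraph V) [Fintype V] : ℤ :=
  if hne : (univ.filter fun p : V × V => H.Adj p.1 p.2).Nonempty then
    (univ.filter fun p : V × V => H.Adj p.1 p.2).sup' hne fun p =>
      ((univ.filter fun w => H.Adj p.1 w ∧ H.Adj p.2 w).card : ℤ)
  else -1

open scoped Classical in
/-- `μ(H)`: maximum number of common neighbours of two distinct nonadjacent vertices,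
`0` for complete graphs. -/
noncomputable def muMax (H : SimpleGraph V) [Fintype V] : ℤ :=
  if hne : (univ.filter fun p : V × V => p.1 ≠ p.2 ∧ ¬H.Adj p.1 p.2).Nonempty then
    (univ.filter fun p : V × V => p.1 ≠ p.2 ∧ ¬H.Adj p.1 p.2).sup' hne fun p =>
      ((univ.filter fun w => H.Adj p.1 w ∧ H.Adj p.2 w).card : ℤ)
  else 0

/-- A graph is vertex-transitive if its automorphism group is transitive on vertices. -/
def IsVertexTransitive (H : SimpleGraph V) : Prop :=
  ∀ u v : V, ∃ φ : H ≃g H, φ u = v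

/-- Two distinct vertices are twins if they have the same closed or the same open
neighbourhood. -/
def SimpleGraph.Twins (G : SimpleGraph V) (u1 u2 : V) : Prop :=
  u1 ≠ u2 ∧ (insert u1 (G.neighborSet u1) = insert u2 (G.neighborSet u2) ∨
    G.neighborSet u1 = G.neighborSet u2)

open scoped Classical in
/-- `m₁(G)`: number of vertices in twin-equivalence classes of type 1 (singletons). -/
noncomputable def m1 (G : SimpleGraph V) [Fintype V] : ℕ :=
  (univ.filter fun u => ∀ w, ¬G.Twins u w).card

open scoped Classical in
/-- `m₂(G)`: number of vertices in twin-equivalence classes of type 2 (cliques). -/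
noncomputable def m2 (G : SimpleGraph V) [Fintype V] : ℕ :=
  (univ.filter fun u => ∃ w, G.Twins u w ∧ G.Adj u w).card

open scoped Classical in
/-- `m₃(G)`: number of vertices in twin-equivalence classes of type 3 (independent sets). -/
noncomputable def m3 (G : SimpleGraph V) [Fintype V] : ℕ :=
  (univ.filter fun u => ∃ w, G.Twins u w ∧ ¬G.Adj u w).card

/-!
The apex of `K₁ ⊙ H` is adjacent to every other vertex, so all distances in `K₁ ⊙ H` are at
most `2` and two vertices of `H` are resolved in `K₁ ⊙ H` by exactly (the copy of) their locating
set `S_H`, the apex resolving neither pair. Hence a resolving function of `K₁ ⊙ H` restricts to a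
locating function of `H`, and a locating function of `H`, extended by weight `1` on the apex
(which separates itself from every other vertex), is a resolving function of `K₁ ⊙ H`.
-/

namespace SimpleGraph

variable {G : SimpleGraph α} {H : SimpleGraph β}

@[simp] lemma corona_adj_inl_inr {u : α} {p : α × β} :
    (G.corona H).Adj (Sum.inl u) (Sum.inr p) ↔ u = p.1 := Iff.rfl

@[simp] lemma corona_adj_inr_inl {p : α × β} {u : α} :
    (G.corona H).Adj (Sum.inr p) (Sum.inl u) ↔ p.1 = u := Iff.rfl

@[simp] lemma corona_adj_inr_inr {p q : α × β} :
    (G.corona H).Adj (Sum.inr p) (Sum.inr q) ↔ p.1 = q.1 ∧ H.Adj p.2 q.2 := Iff.rfl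

lemma corona_unit_adj_inl (H : SimpleGraph β) :
    ∀ z, z ≠ Sum.inl () → ((⊥ : SimpleGraph Unit).corona H).Adj (Sum.inl ()) z := by
  rintro (⟨⟩ | p) hz
  · exact absurd rfl hz
  · simp

variable {F : SimpleGraph V} {c u v : V}

lemma edist_eq_two_of_forall_adj (hc : ∀ w, w ≠ c → F.Adj c w) (huv : u ≠ v)
    (hadj : ¬F.Adj u v) : F.edist u v = 2 := by
  have hu : u ≠ c := fun h => hadj (h ▸ hc v (h ▸ huv).symm)
  have hv : v ≠ c := fun h => hadj (h ▸ (hc u (h ▸ huv)).symm)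
  exact edist_eq_two_iff.mpr ⟨huv, hadj, c, (hc u hu).symm, (hc v hv).symm⟩

open scoped Classical in
lemma edist_eq_ite_of_forall_adj (hc : ∀ w, w ≠ c → F.Adj c w) (huv : u ≠ v) :
    F.edist u v = if F.Adj u v then 1 else 2 := by
  split_ifs with hadj
  · exact edist_eq_one_iff_adj.mpr hadj
  · exact edist_eq_two_of_forall_adj hc huv hadj

end SimpleGraph

section Resolving

open SimpleGraph

variable [Fintype V] {F : SimpleGraph V} {c x y z : V}

lemma mem_resolvingFinset :
    z ∈ resolvingFinset F x y ↔ F.edist x z ≠ F.edist y z := by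
  simp [resolvingFinset]

lemma left_mem_resolvingFinset (hxy : x ≠ y) : x ∈ resolvingFinset F x y := by
  rw [mem_resolvingFinset, edist_self, ne_comm, Ne, edist_eq_zero_iff]
  exact hxy.symm

lemma right_mem_resolvingFinset (hxy : x ≠ y) : y ∈ resolvingFinset F x y := by
  rw [mem_resolvingFinset, edist_self, Ne, edist_eq_zero_iff]
  exact hxy

lemma mem_resolvingFinset_of_forall_adj (hc : ∀ w, w ≠ c → F.Adj c w) (hxy : x ≠ y) :
    z ∈ resolvingFinset F x y ↔ z = x ∨ z = y ∨ ¬(F.Adj x z ↔ F.Adj y z) := by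
  classical
  by_cases hzx : z = x
  · subst hzx; simpa using left_mem_resolvingFinset hxy
  by_cases hzy : z = y
  · subst hzy; simpa using right_mem_resolvingFinset hxy
  rw [mem_resolvingFinset, edist_eq_ite_of_forall_adj hc (Ne.symm hzx),
    edist_eq_ite_of_forall_adj hc (Ne.symm hzy)]
  split_ifs <;> simp_all

end Resolving

section Fractional

variable [Fintype V] {a : ℝ}

lemma isResolvingFn_one (F : SimpleGraph V) : IsResolvingFn F 1 :=
  ⟨fun _ => by simp, fun _ _ hxy => single_le_sum (f := (1 : V → ℝ))
    (fun _ _ => zero_le_one) (left_mem_resolvingFinset hxy)⟩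

lemma fracMetricDim_le {F : SimpleGraph V} {g : V → ℝ} (hg : IsResolvingFn F g) :
    fracMetricDim F ≤ ∑ v, g v :=
  csInf_le ⟨0, by rintro _ ⟨g, hg, rfl⟩; exact sum_nonneg fun v _ => (hg.1 v).1⟩
    ⟨g, hg, rfl⟩

lemma le_fracMetricDim {F : SimpleGraph V} (h : ∀ g, IsResolvingFn F g → a ≤ ∑ v, g v) :
    a ≤ fracMetricDim F :=
  le_csInf ⟨_, 1, isResolvingFn_one F, rfl⟩ fun _ ⟨g, hg, hw⟩ => hw ▸ h g hg

variable [DecidableEq V] (H : SimpleGraph V) [DecidableRel H.Adj]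

lemma isLocatingFn_one : IsLocatingFn H 1 :=
  ⟨fun _ => by simp, fun v _ _ => single_le_sum (f := (1 : V → ℝ))
    (fun _ _ => zero_le_one) (show v ∈ locatingFinset H v _ by simp [locatingFinset])⟩

variable {H}

lemma fracLoc_le {g : V → ℝ} (hg : IsLocatingFn H g) : fracLoc H ≤ ∑ v, g v :=
  csInf_le ⟨0, by rintro _ ⟨g, hg, rfl⟩; exact sum_nonneg fun v _ => (hg.1 v).1⟩
    ⟨g, hg, rfl⟩

lemma le_fracLoc (h : ∀ g, IsLocatingFn H g → a ≤ ∑ v, g v) : a ≤ fracLoc H :=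
  le_csInf ⟨_, 1, isLocatingFn_one H, rfl⟩ fun _ ⟨g, hg, hw⟩ => hw ▸ h g hg

end Fractional

section Corona

open SimpleGraph

local notation "K₁⊙" => SimpleGraph.corona (⊥ : SimpleGraph Unit)

variable [Fintype β]

lemma sum_comp_inr_le_sum {g : Unit ⊕ Unit × β → ℝ} (hg : ∀ z, 0 ≤ g z) :
    ∑ v, g (Sum.inr ((), v)) ≤ ∑ z, g z := by
  simpa [Fintype.sum_sum_type, Fintype.sum_prod_type] using hg (Sum.inl ())

lemma sum_elim_one_snd (g : β → ℝ) :
    ∑ z, Sum.elim (1 : Unit → ℝ) (fun p : Unit × β => g p.2) z = ∑ v, g v + 1 := by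
  simp [Fintype.sum_sum_type, Fintype.sum_prod_type, add_comm]

variable [DecidableEq β] {H : SimpleGraph β} [DecidableRel H.Adj]

lemma sum_resolvingFinset_corona_unit_inr {v w : β} (hvw : v ≠ w) (g : Unit ⊕ Unit × β → ℝ) :
    ∑ z ∈ resolvingFinset (K₁⊙ H) (Sum.inr ((), v)) (Sum.inr ((), w)), g z =
      ∑ u ∈ locatingFinset H v w, g (Sum.inr ((), u)) := by
  have hR : resolvingFinset (K₁⊙ H) (Sum.inr ((), v)) (Sum.inr ((), w)) =
      (locatingFinset H v w).map
        ((Function.Embedding.sectR () β).trans Function.Embedding.inr) := by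
    ext z
    rw [mem_resolvingFinset_of_forall_adj (corona_unit_adj_inl H) (by simpa using hvw)]
    rcases z with ⟨⟩ | ⟨⟨⟩, u⟩
    · simp
    · simp [locatingFinset, mem_symmDiff]
      tauto
  rw [hR, sum_map]
  rfl

lemma IsResolvingFn.isLocatingFn_corona_unit_inr {g : Unit ⊕ Unit × β → ℝ}
    (hg : IsResolvingFn (K₁⊙ H) g) : IsLocatingFn H fun v => g (Sum.inr ((), v)) :=
  ⟨fun _ => hg.1 _, fun v w hvw => by
    simpa only [sum_resolvingFinset_corona_unit_inr hvw]
      using hg.2 (Sum.inr ((), v)) (Sum.inr ((), w)) (by simpa using hvw)⟩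

lemma IsLocatingFn.isResolvingFn_corona_unit {g : β → ℝ} (hg : IsLocatingFn H g) :
    IsResolvingFn (K₁⊙ H) (Sum.elim 1 fun p : Unit × β => g p.2) := by
  set f : Unit ⊕ Unit × β → ℝ := Sum.elim 1 fun p => g p.2
  have hf : ∀ z, f z ∈ Set.Icc (0 : ℝ) 1 := by
    rintro (_ | p)
    · simp [f]
    · exact hg.1 p.2
  have hapex {x y : Unit ⊕ Unit × β} (h : Sum.inl () ∈ resolvingFinset (K₁⊙ H) x y) :
      1 ≤ ∑ z ∈ resolvingFinset (K₁⊙ H) x y, f z :=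
    single_le_sum (fun z _ => (hf z).1) h
  refine ⟨hf, ?_⟩
  rintro (⟨⟩ | ⟨⟨⟩, v⟩) (⟨⟩ | ⟨⟨⟩, w⟩) hxy
  · exact absurd rfl hxy
  · exact hapex (left_mem_resolvingFinset hxy)
  · exact hapex (right_mem_resolvingFinset hxy)
  · have hvw : v ≠ w := by simpa using hxy
    simpa [f, sum_resolvingFinset_corona_unit_inr hvw] using hg.2 v w hvw

end Corona

theorem stmt_8_general {β : Type*} [Fintype β] [DecidableEq β]
    (H : SimpleGraph β) [DecidableRel H.Adj] :
    fracLoc H ≤ fracMetricDim ((⊥ : SimpleGraph Unit).corona H) ∧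
      fracMetricDim ((⊥ : SimpleGraph Unit).corona H) ≤ fracLoc H + 1 := by
  refine ⟨le_fracMetricDim fun g hg => ?_, ?_⟩
  · exact (fracLoc_le hg.isLocatingFn_corona_unit_inr).trans
      (sum_comp_inr_le_sum fun z => (hg.1 z).1)
  · refine sub_le_iff_le_add.mp (le_fracLoc fun g hg => ?_)
    have := fracMetricDim_le hg.isResolvingFn_corona_unit
    rw [sum_elim_one_snd] at this
    linarith

/-- For any graph `H`, `l_f(H) ≤ dim_f(K₁ ⊙ H) ≤ l_f(H) + 1`. -/
theorem stmt_8 {β : Type*} [Fintype β] [DecidableEq β]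
    (H : SimpleGraph β) [DecidableRel H.Adj] (hcb : 2 ≤ Fintype.card β) :
    fracLoc H ≤ fracMetricDim ((⊥ : SimpleGraph Unit).corona H) ∧
      fracMetricDim ((⊥ : SimpleGraph Unit).corona H) ≤ fracLoc H + 1 :=
  stmt_8_general H
end

section
/- Let H be a graph that is either disconnected without isolated vertices, or connected with diameter at least six. Then dim_f(K1⊙H) = l_f(H). -/
open Finset

variable {α β V : Type*}

/-!
In `K₁ ⊙ H` two vertices of `H` are at distance `0`, `1` or `2` according as they are equal,
adjacent or not, so `R{a,b} = S_H{a,b}` for vertices `a ≠ b` of `H`, while the apex `c` and a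
vertex `v` of `H` are resolved exactly by `c` and the non-neighbours of `v`. Restricting a
resolving function to `H` therefore gives a locating function of no larger weight. Conversely,
extending a locating function by `0` at the apex gives a resolving function as soon as every `v`
admits `a ≠ b` with `S_H{a,b}` disjoint from `N(v)`. Any `a ≠ b` at distance at least `3` from `v`
will do, since `S_H{a,b} ⊆ N[a] ∪ N[b]`: take an edge in a component of `H` missing `v`, or, when
`d(u,u') ≥ 6`, either `u, u'` themselves or an edge at whichever of them is at distance at least
`4` from `v`.
-/

lemma resolvingFinset_comm (F : SimpleGraph V) [Fintype V] (x y : V) :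
    resolvingFinset F x y = resolvingFinset F y x := by
  simp only [resolvingFinset, ne_comm]

def coneInr : β ↪ Unit ⊕ Unit × β :=
  (Function.Embedding.sectR () β).trans Function.Embedding.inr

@[simp] lemma coneInr_apply (b : β) : coneInr b = Sum.inr ((), b) := rfl

lemma sum_comp_coneInr_le [Fintype β] {g : Unit ⊕ Unit × β → ℝ} (hg : ∀ v, 0 ≤ g v) :
    ∑ b, g (coneInr b) ≤ ∑ v, g v := by
  simpa [Fintype.sum_sum_type, Fintype.sum_prod_type] using hg (.inl ())

lemma sum_sum_elim_zero [Fintype β] (g : β → ℝ) :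
    ∑ v : Unit ⊕ Unit × β, Sum.elim 0 (g ∘ Prod.snd) v = ∑ b, g b := by
  simp [Fintype.sum_sum_type, Fintype.sum_prod_type]

namespace SimpleGraph

variable (H : SimpleGraph β)

lemma edist_corona_bot_inl_inr (b : β) :
    ((⊥ : SimpleGraph Unit).corona H).edist (.inl ()) (.inr ((), b)) = 1 :=
  edist_eq_one_iff_adj.mpr rfl

lemma edist_corona_bot_inr_inr [DecidableEq β] [DecidableRel H.Adj] (a b : β) :
    ((⊥ : SimpleGraph Unit).corona H).edist (.inr ((), a)) (.inr ((), b)) =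
      if a = b then 0 else if H.Adj a b then 1 else 2 := by
  split_ifs with hab hadj
  · rw [hab, edist_self]
  · exact edist_eq_one_iff_adj.mpr ⟨rfl, hadj⟩
  · exact edist_eq_two_iff.mpr ⟨by simpa using hab, fun h => hadj h.2, ⟨.inl (), rfl, rfl⟩⟩

end SimpleGraph

open SimpleGraph

section Corona

variable {H : SimpleGraph β} [Fintype β] [DecidableEq β] [DecidableRel H.Adj]

variable (H) in
lemma resolvingFinset_corona_bot_inr_inr {a b : β} (hab : a ≠ b) :
    resolvingFinset ((⊥ : SimpleGraph Unit).corona H) (.inr ((), a)) (.inr ((), b)) =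
      (locatingFinset H a b).map coneInr := by
  ext (⟨⟨⟩⟩ | ⟨⟨⟩, r⟩)
  · simp [resolvingFinset, edist_comm (u := Sum.inr _), edist_corona_bot_inl_inr]
  · simp only [resolvingFinset, locatingFinset, mem_filter, mem_univ, true_and, mem_map,
      edist_corona_bot_inr_inr, mem_union, mem_insert, mem_singleton, mem_symmDiff,
      mem_neighborFinset, coneInr_apply, Sum.inr.injEq, Prod.mk.injEq, exists_eq_right]
    split_ifs <;> simp_all [eq_comm]

variable (H) in
lemma resolvingFinset_corona_bot_inl_inr (b : β) :
    resolvingFinset ((⊥ : SimpleGraph Unit).corona H) (.inl ()) (.inr ((), b)) =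
      insert (.inl ()) ((H.neighborFinset b)ᶜ.map coneInr) := by
  ext (⟨⟨⟩⟩ | ⟨⟨⟩, r⟩)
  · simp [resolvingFinset, edist_comm (u := Sum.inr _), edist_corona_bot_inl_inr]
  · simp only [resolvingFinset, mem_filter, mem_univ, true_and, mem_insert, mem_map, mem_compl,
      edist_corona_bot_inl_inr, edist_corona_bot_inr_inr, mem_neighborFinset, coneInr_apply,
      reduceCtorEq, false_or, Sum.inr.injEq, Prod.mk.injEq, exists_eq_right]
    split_ifs <;> simp_all [eq_comm]

lemma IsResolvingFn.isLocatingFn_comp_coneInr {g : Unit ⊕ Unit × β → ℝ}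
    (hg : IsResolvingFn ((⊥ : SimpleGraph Unit).corona H) g) : IsLocatingFn H (g ∘ coneInr) := by
  refine ⟨fun v => hg.1 _, fun a b hab => ?_⟩
  simpa [resolvingFinset_corona_bot_inr_inr H hab, sum_map] using
    hg.2 (.inr ((), a)) (.inr ((), b)) (by simpa using hab)

lemma IsLocatingFn.isResolvingFn_corona_bot {g : β → ℝ} (hg : IsLocatingFn H g)
    (hfar : ∀ v, ∃ a b, a ≠ b ∧ Disjoint (locatingFinset H a b) (H.neighborFinset v)) :
    IsResolvingFn ((⊥ : SimpleGraph Unit).corona H) (Sum.elim 0 (g ∘ Prod.snd)) := by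
  have apex (b : β) : 1 ≤ ∑ z ∈ resolvingFinset ((⊥ : SimpleGraph Unit).corona H)
      (.inl ()) (.inr ((), b)), Sum.elim 0 (g ∘ Prod.snd) z := by
    obtain ⟨a₁, a₂, ha, hdisj⟩ := hfar b
    rw [resolvingFinset_corona_bot_inl_inr, sum_insert (by simp), sum_map]
    calc 1 ≤ ∑ v ∈ locatingFinset H a₁ a₂, g v := hg.2 a₁ a₂ ha
      _ ≤ ∑ v ∈ (H.neighborFinset b)ᶜ, g v :=
        sum_le_sum_of_subset_of_nonneg (subset_compl_iff_disjoint_right.mpr hdisj)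
          fun v _ _ => (hg.1 v).1
      _ = _ := by simp
  refine ⟨?_, ?_⟩
  · rintro (_ | ⟨_, v⟩)
    · simp
    · exact hg.1 v
  · rintro (⟨⟨⟩⟩ | ⟨⟨⟩, a⟩) (⟨⟨⟩⟩ | ⟨⟨⟩, b⟩) hne
    · exact absurd rfl hne
    · exact apex b
    · rw [resolvingFinset_comm]
      exact apex a
    · have hab : a ≠ b := by simpa using hne
      simpa [resolvingFinset_corona_bot_inr_inr H hab, sum_map] using hg.2 a b hab

theorem fracMetricDim_corona_bot_eq_fracLoc
    (hfar : ∀ v, ∃ a b, a ≠ b ∧ Disjoint (locatingFinset H a b) (H.neighborFinset v)) :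
    fracMetricDim ((⊥ : SimpleGraph Unit).corona H) = fracLoc H := by
  refine csInf_eq_csInf_of_forall_exists_le ?_ ?_
  · rintro _ ⟨g, hg, rfl⟩
    exact ⟨_, ⟨_, hg.isLocatingFn_comp_coneInr, rfl⟩, sum_comp_coneInr_le fun v => (hg.1 v).1⟩
  · rintro _ ⟨g, hg, rfl⟩
    exact ⟨_, ⟨_, hg.isResolvingFn_corona_bot hfar, rfl⟩, (sum_sum_elim_zero g).le⟩

end Corona

namespace SimpleGraph

variable {H : SimpleGraph β}

lemma disjoint_locatingFinset_neighborFinset [Fintype β] [DecidableEq β] [DecidableRel H.Adj]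
    {a b v : β} (ha : 3 ≤ H.edist v a) (hb : 3 ≤ H.edist v b) :
    Disjoint (locatingFinset H a b) (H.neighborFinset v) := by
  rw [Finset.disjoint_left]
  intro z hz hvz
  have near (w : β) (hwz : H.Adj z w ∨ z = w) : H.edist v w < 3 :=
    calc H.edist v w ≤ H.edist v z + H.edist z w := H.edist_triangle
      _ ≤ 1 + 1 := add_le_add (edist_eq_one_iff_adj.mpr ((mem_neighborFinset ..).mp hvz)).le
          (edist_le_one_iff_adj_or_eq.mpr hwz)
      _ < 3 := by norm_num
  simp only [locatingFinset, mem_union, mem_insert, mem_singleton, mem_symmDiff,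
    mem_neighborFinset] at hz
  rcases hz with (rfl | rfl) | ⟨haz, -⟩ | ⟨hbz, -⟩
  · exact (near z (.inr rfl)).not_ge ha
  · exact (near z (.inr rfl)).not_ge hb
  · exact (near a (.inl haz.symm)).not_ge ha
  · exact (near b (.inl hbz.symm)).not_ge hb

lemma exists_ne_three_le_edist_of_not_connected (hnc : ¬H.Connected)
    (hmin : ∀ v, ∃ w, H.Adj v w) (v : β) :
    ∃ a b, a ≠ b ∧ 3 ≤ H.edist v a ∧ 3 ≤ H.edist v b := by
  obtain ⟨a, ha⟩ : ∃ a, ¬H.Reachable v a := by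
    by_contra! h
    exact hnc ((connected_iff_exists_forall_reachable H).mpr ⟨v, h⟩)
  obtain ⟨b, hab⟩ := hmin a
  have hb : ¬H.Reachable v b := fun h => ha (h.trans hab.reachable.symm)
  exact ⟨a, b, hab.ne, by simp [edist_eq_top_of_not_reachable ha],
    by simp [edist_eq_top_of_not_reachable hb]⟩

lemma Connected.exists_adj_three_le_dist (hc : H.Connected) {v w : β} (h : 4 ≤ H.dist v w) :
    ∃ x, H.Adj w x ∧ 3 ≤ H.dist v x := by
  obtain ⟨p⟩ := hc.preconnected w v
  cases p with
  | nil => simp at h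
  | @cons _ x _ hwx _ =>
    have tri : H.dist v w ≤ H.dist v x + H.dist x w := hc.dist_triangle
    rw [dist_eq_one_iff_adj.mpr hwx.symm] at tri
    exact ⟨x, hwx, by omega⟩

lemma Connected.exists_ne_three_le_edist (hc : H.Connected) {u u' : β}
    (huu' : 6 ≤ H.dist u u') (v : β) :
    ∃ a b, a ≠ b ∧ 3 ≤ H.edist v a ∧ 3 ≤ H.edist v b := by
  simp only [← (hc.preconnected v _).coe_dist_eq_edist, Nat.ofNat_le_cast]
  have tri : H.dist u u' ≤ H.dist v u + H.dist v u' := dist_comm (u := u) ▸ hc.dist_triangle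
  have of_far (w : β) (hw : 4 ≤ H.dist v w) :
      ∃ a b, a ≠ b ∧ 3 ≤ H.dist v a ∧ 3 ≤ H.dist v b := by
    obtain ⟨x, hwx, hx⟩ := hc.exists_adj_three_le_dist hw
    exact ⟨w, x, hwx.ne, by omega, hx⟩
  by_cases hu : 3 ≤ H.dist v u
  · by_cases hu' : 3 ≤ H.dist v u'
    · exact ⟨u, u', by rintro rfl; simp at huu', hu, hu'⟩
    · exact of_far u (by omega)
  · exact of_far u' (by omega)

end SimpleGraph

theorem stmt_10_general {β : Type*} [Fintype β] [DecidableEq β]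
    (H : SimpleGraph β) [DecidableRel H.Adj]
    (h : (¬H.Connected ∧ ∀ v : β, ∃ w : β, H.Adj v w) ∨
      (H.Connected ∧ ∃ u v : β, 6 ≤ H.dist u v)) :
    fracMetricDim ((⊥ : SimpleGraph Unit).corona H) = fracLoc H := by
  refine fracMetricDim_corona_bot_eq_fracLoc fun v => ?_
  obtain ⟨a, b, hab, ha, hb⟩ : ∃ a b, a ≠ b ∧ 3 ≤ H.edist v a ∧ 3 ≤ H.edist v b := by
    rcases h with ⟨hnc, hmin⟩ | ⟨hc, u, u', huu'⟩
    · exact exists_ne_three_le_edist_of_not_connected hnc hmin v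
    · exact hc.exists_ne_three_le_edist huu' v
  exact ⟨a, b, hab, disjoint_locatingFinset_neighborFinset ha hb⟩

/-- If `H` is disconnected without isolated vertices, or connected
with diameter at least six, then `dim_f(K₁ ⊙ H) = l_f(H)`. -/
theorem stmt_10 {β : Type*} [Fintype β] [DecidableEq β]
    (H : SimpleGraph β) [DecidableRel H.Adj] (hcb : 2 ≤ Fintype.card β)
    (h : (¬H.Connected ∧ ∀ v : β, ∃ w : β, H.Adj v w) ∨
      (H.Connected ∧ ∃ u v : β, 6 ≤ H.dist u v)) :
    fracMetricDim ((⊥ : SimpleGraph Unit).corona H) = fracLoc H :=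
  stmt_10_general H h
end
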